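/- Let λ ∈ ℝ, let r be a positive integer, and let (Y_j)_{j≥1} be i.i.d. real random variables with all moments finite. For all integers n, j ≥ 0 and all y ∈ ℝ, the probabilistic degenerate r-Bell polynomials satisfy: φ^{(r,Y)}_{j+n,λ}(y) = Σ_{l=0}^{n} C(n,l) (r)_{n−l,λ} Σ_{k=0}^{l} Σ_{m=0}^{j} (y^k / k!) C(j,m) Σ_{l₁+⋯+l_k = l, each lᵢ ≥ 1} C(l; l₁,…,l_k) · E[(S_k − nλ)_{j−m,λ} · ∏_{i=1}^{k} (Y_i)_{l_i,λ}] · φ^{(r,Y)}_{m,λ}(y), where the innermost sum is over all k-tuples (l₁,…,l_k) of positive integers with l₁+⋯+l_k = l and C(l; l₁,…,l_k) = l!/(l₁!⋯l_k!) is the multinomial coefficient. -/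

import Mathlib

open MeasureTheory ProbabilityTheory Finset

/-- The degenerate falling factorial `(x)_{n,λ} = ∏_{i=0}^{n-1} (x - iλ)`. -/
noncomputable def degFall (lam x : ℝ) (n : ℕ) : ℝ :=
  ∏ i ∈ Finset.range n, (x - (i : ℝ) * lam)

/-- The probabilistic degenerate Stirling numbers of the second kind associated with `Y`:
`{n \brace k}_{Y,λ} = (1/k!) ∑_{j=0}^{k} (-1)^{k-j} C(k,j) E[(S_j)_{n,λ}]`. -/
noncomputable def probDegStirling {Ω : Type*} [MeasurableSpace Ω] (μ : Measure Ω)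
    (Y : ℕ → Ω → ℝ) (lam : ℝ) (n k : ℕ) : ℝ :=
  (1 / (Nat.factorial k : ℝ)) * ∑ j ∈ Finset.range (k + 1),
    (-1 : ℝ) ^ (k - j) * (Nat.choose k j : ℝ) *
      ∫ ω, degFall lam (∑ i ∈ Finset.range j, Y i ω) n ∂μ

/-- The probabilistic degenerate Bell polynomials associated with `Y`:
`φ^Y_{n,λ}(x) = ∑_{k=0}^{n} {n \brace k}_{Y,λ} x^k`. -/
noncomputable def probDegBell {Ω : Type*} [MeasurableSpace Ω] (μ : Measure Ω)
    (Y : ℕ → Ω → ℝ) (lam : ℝ) (n : ℕ) (x : ℝ) : ℝ :=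
  ∑ k ∈ Finset.range (n + 1), probDegStirling μ Y lam n k * x ^ k

/-- The probabilistic degenerate `r`-Bell polynomials associated with `Y`:
`φ^{(r,Y)}_{n,λ}(y) = ∑_{l=0}^{n} C(n,l) (r)_{n-l,λ} φ^Y_{l,λ}(y)`. -/
noncomputable def probDegrBell {Ω : Type*} [MeasurableSpace Ω] (μ : Measure Ω)
    (Y : ℕ → Ω → ℝ) (lam : ℝ) (r : ℕ) (n : ℕ) (y : ℝ) : ℝ :=
  ∑ l ∈ Finset.range (n + 1),
    (Nat.choose n l : ℝ) * degFall lam (r : ℝ) (n - l) * probDegBell μ Y lam l y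

/-!
The exponential generating function of `m ↦ φ^{(r,Y)}_{m,λ}(y)` is `P = B · e_λ^r(t)` with
`B = exp (y H)`, `H = E[e_λ^Y(t)] - 1`, and the left-hand side is `j!` times the coefficient of
`t^j` in `Dⁿ P`. Expand `Dⁿ P` by Leibniz: `D^{n-l} e_λ^r(t) = (r)_{n-l,λ} e_λ^{r-(n-l)λ}(t)`, while
Faà di Bruno's formula writes `D^l B` as `B` times a sum over compositions `(l₁,…,l_k)` of `l` of
`∏ D^{l_i} H`. Since `D^s H = E[(Y)_{s,λ} e_λ^Y(t)] e_λ^{-sλ}(t)` for `s ≥ 1`, independence turns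
that product into `E[∏ (Y_i)_{l_i,λ} e_λ^{S_k}(t)] e_λ^{-lλ}(t)`, and as the `e_λ^x(t)` multiply
like exponentials everything collects into `P · E[∏ (Y_i)_{l_i,λ} e_λ^{S_k - nλ}(t)]`, whose
coefficient of `t^j` is a binomial convolution.
-/

open MeasureTheory ProbabilityTheory Finset PowerSeries
open scoped Nat

section DegFall

variable (lam : ℝ)

theorem degFall_zero (x : ℝ) : degFall lam x 0 = 1 := prod_range_zero _

theorem degFall_succ (x : ℝ) (n : ℕ) :
    degFall lam x (n + 1) = degFall lam x n * (x - n * lam) :=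
  prod_range_succ _ _

theorem degFall_add_right (x : ℝ) (m n : ℕ) :
    degFall lam x (m + n) = degFall lam x m * degFall lam (x - m * lam) n := by
  induction n with
  | zero => simp [degFall_zero]
  | succ n ih =>
    rw [← add_assoc, degFall_succ, ih, degFall_succ, mul_assoc]
    push_cast
    ring_nf

theorem degFall_add (x z : ℝ) (q : ℕ) :
    degFall lam (x + z) q =
      ∑ i ∈ range (q + 1), (q.choose i : ℝ) * (degFall lam x i * degFall lam z (q - i)) := by
  induction q with
  | zero => simp [degFall_zero]
  | succ q ih =>
    rw [sum_choose_succ_mul (fun i j => degFall lam x i * degFall lam z j), degFall_succ, ih,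
      sum_mul, ← sum_add_distrib]
    refine sum_congr rfl fun i hi => ?_
    have hi : i ≤ q := Nat.lt_succ_iff.mp (mem_range.mp hi)
    rw [Nat.sub_add_comm hi, degFall_succ, degFall_succ, Nat.cast_sub hi]
    ring

theorem degFall_add_mul_eq_sum (x z a b : ℝ) (q : ℕ) :
    degFall lam (x + z) q * (a * b) = ∑ i ∈ range (q + 1),
      (q.choose i : ℝ) * ((degFall lam x i * a) * (degFall lam z (q - i) * b)) := by
  rw [degFall_add, sum_mul]
  exact sum_congr rfl fun i _ => by ring

theorem degFall_eq_eval (x : ℝ) (n : ℕ) :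
    degFall lam x n = (∏ i ∈ range n, (Polynomial.X - Polynomial.C (i * lam))).eval x := by
  simp [degFall, Polynomial.eval_prod]

theorem continuous_degFall (n : ℕ) : Continuous fun x => degFall lam x n :=
  continuous_finsetProd _ fun _ _ => by fun_prop

@[fun_prop]
theorem measurable_degFall (n : ℕ) : Measurable fun x => degFall lam x n :=
  (continuous_degFall lam n).measurable

end DegFall

theorem Finset.Nat.sum_antidiagonalTuple_succ {M : Type*} [AddCommMonoid M] (k l : ℕ)
    (f : (Fin (k + 1) → ℕ) → M) :
    ∑ t ∈ Finset.Nat.antidiagonalTuple (k + 1) l, f t =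
      ∑ p ∈ antidiagonal l, ∑ s ∈ Finset.Nat.antidiagonalTuple k p.2, f (Fin.cons p.1 s) := by
  rw [sum_sigma']
  refine sum_nbij' (fun t => ⟨(t 0, ∑ i, Fin.tail t i), Fin.tail t⟩)
    (fun p => Fin.cons p.1.1 p.2) ?_ ?_ ?_ ?_ ?_ <;>
    simp_all [Finset.Nat.mem_antidiagonalTuple, Fin.sum_univ_succ, Fin.tail]

theorem Nat.multinomial_univ_cons (k a : ℕ) (s : Fin k → ℕ) :
    Nat.multinomial univ (Fin.cons a s : Fin (k + 1) → ℕ) =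
      (a + ∑ i, s i).choose a * Nat.multinomial univ s := by
  rw [Fin.univ_succ, Nat.multinomial_cons]
  simp [Nat.multinomial, sum_map, prod_map]

section OrderedBell

variable {A : Type*} [CommSemiring A] (x : ℕ → A)

/-- `k!` times the partial Bell polynomial `B_{l,k}(x₁, x₂, …)`: a sum over the compositions of `l`
into `k` positive parts. -/
def orderedBell (l k : ℕ) : A :=
  ∑ t ∈ (Finset.Nat.antidiagonalTuple k l).filter (fun t => ∀ i, 0 < t i),
    Nat.multinomial univ t • ∏ i, x (t i)

theorem orderedBell_zero_zero : orderedBell x 0 0 = 1 := by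
  simp [orderedBell]

theorem orderedBell_succ_zero (l : ℕ) : orderedBell x (l + 1) 0 = 0 := by
  simp [orderedBell]

theorem orderedBell_eq_zero_of_lt {l k : ℕ} (h : l < k) : orderedBell x l k = 0 := by
  refine sum_eq_zero fun t ht => absurd h (not_lt.mpr ?_)
  rw [mem_filter, Finset.Nat.mem_antidiagonalTuple] at ht
  calc k = ∑ _i : Fin k, 1 := by simp
    _ ≤ l := ht.1 ▸ sum_le_sum fun i _ => ht.2 i

theorem orderedBell_succ (l k : ℕ) :
    orderedBell x l (k + 1) =
      ∑ s ∈ range l, l.choose (s + 1) • (x (s + 1) * orderedBell x (l - (s + 1)) k) := by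
  rw [orderedBell, sum_filter, Finset.Nat.sum_antidiagonalTuple_succ,
    Nat.sum_antidiagonal_eq_sum_range_succ_mk, sum_range_succ']
  simp only [Fin.forall_fin_succ, Fin.cons_zero, Fin.cons_succ, lt_irrefl, false_and,
    if_false, sum_const_zero, add_zero]
  refine sum_congr rfl fun a ha => ?_
  rw [orderedBell, sum_filter, mul_sum, smul_sum]
  refine sum_congr rfl fun s hs => ?_
  rw [Finset.Nat.mem_antidiagonalTuple] at hs
  simp only [Nat.succ_pos, true_and]
  split_ifs
  · rw [Nat.multinomial_univ_cons, hs, Nat.add_sub_cancel' (mem_range.mp ha), Fin.prod_univ_succ]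
    simp only [Fin.cons_zero, Fin.cons_succ, mul_smul, mul_smul_comm]
  · simp

end OrderedBell

namespace Derivation

variable {R A : Type*} [CommSemiring R] [CommSemiring A] [Algebra R A] (D : Derivation R A A)

theorem iterate_leibniz (a b : A) (n : ℕ) :
    (⇑D)^[n] (a * b) = ∑ i ∈ range (n + 1), n.choose i • ((⇑D)^[i] a * (⇑D)^[n - i] b) := by
  induction n with
  | zero => simp
  | succ n ih =>
    rw [sum_choose_succ_nsmul (fun i j => (⇑D)^[i] a * (⇑D)^[j] b), Function.iterate_succ_apply',
      ih, map_sum, ← sum_add_distrib]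
    refine sum_congr rfl fun i hi => ?_
    have hi : i ≤ n := Nat.lt_succ_iff.mp (mem_range.mp hi)
    rw [map_nsmul, Derivation.leibniz, Nat.sub_add_comm hi, Function.iterate_succ_apply',
      Function.iterate_succ_apply', smul_eq_mul, smul_eq_mul, smul_add]
    ring

/-- Faà di Bruno's formula for powers, grouped by the number `i` of factors that are differentiated
at least once. -/
theorem iterate_pow (a : A) (K l : ℕ) :
    (⇑D)^[l] (a ^ K) = ∑ i ∈ range (K + 1),
      K.choose i • (a ^ (K - i) * orderedBell (fun s => (⇑D)^[s] a) l i) := by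
  induction K generalizing l with
  | zero =>
    cases l with
    | zero => simp [orderedBell_zero_zero]
    | succ l => simp [orderedBell_succ_zero, iterate_map_zero]
  | succ K ih =>
    rw [pow_succ', D.iterate_leibniz, sum_range_succ', add_comm,
      sum_choose_succ_nsmul fun i j => a ^ j * orderedBell (fun s => (⇑D)^[s] a) l i]
    congr 1
    · rw [Nat.choose_zero_right, one_smul, Function.iterate_zero_apply, Nat.sub_zero, ih,
        mul_sum]
      refine sum_congr rfl fun i hi => ?_
      rw [Nat.sub_add_comm (Nat.lt_succ_iff.mp (mem_range.mp hi)), pow_succ', mul_smul_comm,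
        mul_assoc]
    · simp only [ih, orderedBell_succ, mul_sum, smul_sum]
      rw [sum_comm]
      refine sum_congr rfl fun i _ => sum_congr rfl fun s _ => ?_
      rw [mul_smul_comm, mul_smul_comm, smul_comm, mul_left_comm]

end Derivation

namespace PowerSeries

variable {R : Type*} [CommSemiring R]

theorem coeff_pow_mul_eq_zero_of_lt {h : R⟦X⟧} (hh : constantCoeff h = 0) (f : R⟦X⟧) {p k : ℕ}
    (hpk : p < k) : coeff p (h ^ k * f) = 0 :=
  X_pow_dvd_iff.mp ((pow_dvd_pow_of_dvd (X_dvd_iff.mpr hh) k).mul_right f) p hpk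

theorem iterate_derivative_one {s : ℕ} (hs : s ≠ 0) : (d⁄dX R)^[s] (1 : R⟦X⟧) = 0 := by
  obtain ⟨s, rfl⟩ := Nat.exists_eq_succ_of_ne_zero hs
  rw [Function.iterate_succ_apply, derivative_one, iterate_map_zero]

end PowerSeries

section Egf

variable {K : Type*} [Field K]

noncomputable def egf : (ℕ → K) →ₗ[K] K⟦X⟧ where
  toFun a := mk fun n => a n / (n ! : K)
  map_add' a b := by ext; simp [add_div]
  map_smul' c a := by ext; simp [mul_div_assoc]

@[simp]
theorem coeff_egf (a : ℕ → K) (n : ℕ) : coeff n (egf a) = a n / (n ! : K) := by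
  simp [egf]

variable [CharZero K]

theorem egf_mul (a b : ℕ → K) :
    egf a * egf b = egf fun n => ∑ i ∈ range (n + 1), (n.choose i : K) * (a i * b (n - i)) := by
  ext n
  rw [coeff_mul, Nat.sum_antidiagonal_eq_sum_range_succ_mk, coeff_egf, sum_div]
  refine sum_congr rfl fun i hi => ?_
  have hi : i ≤ n := Nat.lt_succ_iff.mp (mem_range.mp hi)
  have : (n ! : K) ≠ 0 := Nat.cast_ne_zero.mpr n.factorial_ne_zero
  simp only [coeff_egf]
  rw [Nat.cast_choose K hi]
  field_simp

theorem factorial_mul_coeff_egf_mul (a b : ℕ → K) (n : ℕ) :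
    n ! * coeff n (egf a * egf b) = ∑ i ∈ range (n + 1), (n.choose i : K) * (a i * b (n - i)) := by
  rw [egf_mul, coeff_egf, mul_div_cancel₀ _ (Nat.cast_ne_zero.mpr n.factorial_ne_zero)]

theorem iterate_derivative_egf (a : ℕ → K) (s : ℕ) :
    (d⁄dX K)^[s] (egf a) = egf fun n => a (n + s) := by
  ext n
  have : (n ! : K) ≠ 0 := Nat.cast_ne_zero.mpr n.factorial_ne_zero
  have : ((n + 1).ascFactorial s : K) ≠ 0 := Nat.cast_ne_zero.mpr (Nat.ascFactorial_pos _ _).ne'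
  rw [coeff_iterate_derivative, coeff_egf, coeff_egf, ← Nat.factorial_mul_ascFactorial,
    Nat.cast_mul]
  field_simp

end Egf

section DegExp

variable (lam : ℝ)

theorem egf_degFall_mul (x z : ℝ) :
    egf (degFall lam x) * egf (degFall lam z) = egf (degFall lam (x + z)) := by
  rw [egf_mul]
  congr 1
  funext q
  rw [degFall_add]

theorem egf_degFall_zero : egf (degFall lam 0) = 1 := by
  ext (_ | n)
  · simp [degFall_zero]
  · simp [degFall, prod_range_succ']

theorem prod_egf_degFall {ι : Type*} (s : Finset ι) (c : ι → ℝ) :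
    ∏ i ∈ s, egf (degFall lam (c i)) = egf (degFall lam (∑ i ∈ s, c i)) := by
  classical
  induction s using Finset.induction_on with
  | empty => simp [egf_degFall_zero]
  | insert i s hi ih => rw [prod_insert hi, sum_insert hi, ih, egf_degFall_mul]

theorem iterate_derivative_egf_degFall (x : ℝ) (s : ℕ) :
    (d⁄dX ℝ)^[s] (egf (degFall lam x)) = degFall lam x s • egf (degFall lam (x - s * lam)) := by
  rw [iterate_derivative_egf, ← map_smul]
  congr 1
  funext n
  rw [add_comm, degFall_add_right, Pi.smul_apply, smul_eq_mul]

end DegExp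

section ExpOfMul

variable {K : Type*} [Field K]

/-- `exp (y h)`, for a power series `h` without constant term. -/
noncomputable def expOfMul (y : K) (h : K⟦X⟧) : K⟦X⟧ :=
  mk fun p => ∑ k ∈ range (p + 1), y ^ k / k ! * coeff p (h ^ k)

variable {h : K⟦X⟧} (hh : constantCoeff h = 0) (y : K)
include hh

theorem coeff_expOfMul_of_lt {p N : ℕ} (hN : p < N) :
    coeff p (expOfMul y h) = ∑ k ∈ range N, y ^ k / k ! * coeff p (h ^ k) := by
  rw [expOfMul, coeff_mk]
  refine sum_subset (range_subset_range.mpr hN) fun k _ hk => ?_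
  have hpk : p < k := by simpa using hk
  have := coeff_pow_mul_eq_zero_of_lt hh 1 hpk
  rw [mul_one] at this
  rw [this, mul_zero]

theorem coeff_expOfMul_mul (f : K⟦X⟧) {q N : ℕ} (hN : q < N) :
    coeff q (expOfMul y h * f) = ∑ k ∈ range N, y ^ k / k ! * coeff q (h ^ k * f) := by
  calc coeff q (expOfMul y h * f)
      = ∑ p ∈ antidiagonal q, (∑ k ∈ range N, y ^ k / k ! * coeff p.1 (h ^ k)) * coeff p.2 f := by
        rw [coeff_mul]
        refine sum_congr rfl fun p hp => ?_
        rw [coeff_expOfMul_of_lt hh y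
          ((Nat.lt_succ_iff.mp (Nat.antidiagonal.fst_lt hp)).trans_lt hN)]
    _ = ∑ k ∈ range N, y ^ k / k ! * coeff q (h ^ k * f) := by
        simp only [coeff_mul, sum_mul, mul_sum, mul_assoc]
        exact sum_comm

theorem iterate_derivative_expOfMul [CharZero K] (l : ℕ) :
    (d⁄dX K)^[l] (expOfMul y h) = expOfMul y h *
      ∑ a ∈ range (l + 1), (y ^ a / a !) • orderedBell (fun s => (d⁄dX K)^[s] h) l a := by
  set S := orderedBell (fun s => (d⁄dX K)^[s] h) l
  ext q
  -- Up to degree `q`, `D^l (exp (y h))` only sees the powers `h^k` with `k ≤ q + l`.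
  calc coeff q ((d⁄dX K)^[l] (expOfMul y h))
      = ∑ k ∈ range (q + l + 1), y ^ k / k ! * coeff q ((d⁄dX K)^[l] (h ^ k)) := by
        rw [coeff_iterate_derivative, coeff_expOfMul_of_lt hh y (show q + l < q + l + 1 by omega),
          mul_sum]
        refine sum_congr rfl fun k _ => ?_
        rw [coeff_iterate_derivative]
        ring
    _ = ∑ k ∈ range (q + l + 1), ∑ a ∈ range (k + 1),
          y ^ a / a ! * (y ^ (k - a) / (k - a)! * coeff q (h ^ (k - a) * S a)) := by
        refine sum_congr rfl fun k _ => ?_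
        rw [(d⁄dX K).iterate_pow, map_sum, mul_sum]
        refine sum_congr rfl fun a ha => ?_
        have ha : a ≤ k := Nat.lt_succ_iff.mp (mem_range.mp ha)
        have : ((k - a)! : K) ≠ 0 := Nat.cast_ne_zero.mpr (Nat.factorial_ne_zero _)
        have : (a ! : K) ≠ 0 := Nat.cast_ne_zero.mpr (Nat.factorial_ne_zero _)
        have : (k ! : K) ≠ 0 := Nat.cast_ne_zero.mpr (Nat.factorial_ne_zero _)
        rw [map_nsmul, nsmul_eq_mul, Nat.cast_choose K ha,
          show y ^ k = y ^ a * y ^ (k - a) by rw [← pow_add, Nat.add_sub_cancel' ha]]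
        field_simp
        rfl
    _ = ∑ a ∈ range (q + l + 1), ∑ b ∈ range (q + l + 1 - a),
          y ^ a / a ! * (y ^ b / b ! * coeff q (h ^ b * S a)) :=
        sum_range_diag_flip (q + l + 1) fun a b =>
          y ^ a / a ! * (y ^ b / b ! * coeff q (h ^ b * S a))
    _ = ∑ a ∈ range (l + 1), ∑ b ∈ range (q + l + 1 - a),
          y ^ a / a ! * (y ^ b / b ! * coeff q (h ^ b * S a)) := by
        refine (sum_subset (range_subset_range.mpr (by omega)) fun a _ ha => ?_).symm
        have hla : l < a := by simpa using ha
        simp [S, orderedBell_eq_zero_of_lt _ hla]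
    _ = ∑ a ∈ range (l + 1), y ^ a / a ! * coeff q (expOfMul y h * S a) := by
        refine sum_congr rfl fun a ha => ?_
        rw [coeff_expOfMul_mul hh y _ (show q < q + l + 1 - a by simp at ha; omega), mul_sum]
    _ = coeff q (expOfMul y h * ∑ a ∈ range (l + 1), (y ^ a / a !) • S a) := by
        simp only [mul_sum, map_sum, mul_smul_comm, coeff_smul, smul_eq_mul]

end ExpOfMul

section DegMoment

variable {Ω : Type*} [MeasurableSpace Ω] (μ : Measure Ω) (lam : ℝ)

-- `egf (degMoment μ lam X w)` is the series `E[w e_λ^X(t)]`.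
noncomputable def degMoment (X w : Ω → ℝ) (q : ℕ) : ℝ :=
  ∫ ω, degFall lam (X ω) q * w ω ∂μ

theorem iterate_derivative_egf_degMoment (X w : Ω → ℝ) (s : ℕ) :
    (d⁄dX ℝ)^[s] (egf (degMoment μ lam X w)) =
      egf (degMoment μ lam (fun ω => X ω + -(s * lam)) fun ω => degFall lam (X ω) s * w ω) := by
  rw [iterate_derivative_egf]
  congr 1
  funext n
  simp only [degMoment]
  congr 1
  funext ω
  rw [add_comm n s, degFall_add_right, ← sub_eq_add_neg, mul_assoc, mul_left_comm]

theorem constantCoeff_egf_degMoment_sub_one [IsProbabilityMeasure μ] (X : Ω → ℝ) :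
    constantCoeff (egf (degMoment μ lam X 1) - 1) = 0 := by
  rw [map_sub, ← coeff_zero_eq_constantCoeff_apply, coeff_egf]
  simp [degMoment, degFall_zero]

variable {μ} {X Z w v : Ω → ℝ}

namespace ProbabilityTheory.IndepFun

variable (hind : IndepFun (fun ω => (X ω, w ω)) (fun ω => (Z ω, v ω)) μ)
  (hXw : ∀ i, Integrable (fun ω => degFall lam (X ω) i * w ω) μ)
  (hZv : ∀ i, Integrable (fun ω => degFall lam (Z ω) i * v ω) μ)
include hind

theorem degFall_mul (i j : ℕ) :
    IndepFun (fun ω => degFall lam (X ω) i * w ω) (fun ω => degFall lam (Z ω) j * v ω) μ :=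
  hind.comp (show Measurable fun p : ℝ × ℝ => degFall lam p.1 i * p.2 by fun_prop)
    (show Measurable fun p : ℝ × ℝ => degFall lam p.1 j * p.2 by fun_prop)

include hXw hZv

theorem integrable_degFall_mul_degFall (i j : ℕ) :
    Integrable (fun ω => degFall lam (X ω) i * w ω * (degFall lam (Z ω) j * v ω)) μ :=
  (hind.degFall_mul lam i j).integrable_mul (hXw i) (hZv j)

theorem integrable_degFall_add_mul (q : ℕ) :
    Integrable (fun ω => degFall lam (X ω + Z ω) q * (w ω * v ω)) μ := by
  simp_rw [degFall_add_mul_eq_sum]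
  exact integrable_finsetSum _ fun i _ =>
    (hind.integrable_degFall_mul_degFall lam hXw hZv i (q - i)).const_mul _

theorem egf_degMoment_add_mul :
    egf (degMoment μ lam (fun ω => X ω + Z ω) (fun ω => w ω * v ω)) =
      egf (degMoment μ lam X w) * egf (degMoment μ lam Z v) := by
  rw [egf_mul]
  congr 1
  funext q
  simp only [degMoment, degFall_add_mul_eq_sum]
  rw [integral_finsetSum _ fun i _ =>
    (hind.integrable_degFall_mul_degFall lam hXw hZv i (q - i)).const_mul _]
  refine sum_congr rfl fun i _ => ?_
  rw [integral_const_mul, (hind.degFall_mul lam i (q - i)).integral_fun_mul_eq_mul_integral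
    (hXw i).aestronglyMeasurable (hZv (q - i)).aestronglyMeasurable]

end ProbabilityTheory.IndepFun

theorem egf_degMoment_add_const [IsProbabilityMeasure μ]
    (hXw : ∀ i, Integrable (fun ω => degFall lam (X ω) i * w ω) μ) (c : ℝ) :
    egf (degMoment μ lam (fun ω => X ω + c) w) =
      egf (degMoment μ lam X w) * egf (degFall lam c) := by
  have h := (indepFun_const_right (μ := μ) (fun ω => (X ω, w ω)) (c, (1 : ℝ))).egf_degMoment_add_mul
    lam hXw fun i => integrable_const (degFall lam c i * 1)
  simp only [mul_one] at h
  rw [h]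
  congr 2
  funext q
  simp [degMoment]

theorem integrable_eval_comp (hX : AEStronglyMeasurable X μ)
    (hmom : ∀ n : ℕ, Integrable (fun ω => |X ω| ^ n) μ) (p : Polynomial ℝ) :
    Integrable (fun ω => p.eval (X ω)) μ := by
  simp_rw [Polynomial.eval_eq_sum_range]
  exact integrable_finsetSum _ fun n _ => ((hmom n).mono' (hX.pow n)
    (.of_forall fun ω => by simp)).const_mul _

end DegMoment

theorem egf_probDegrBell {Ω : Type*} [MeasurableSpace Ω] (μ : Measure Ω) (Y : ℕ → Ω → ℝ)
    (lam : ℝ) (r : ℕ) (y : ℝ) :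
    egf (fun m => probDegrBell μ Y lam r m y) =
      egf (fun p => probDegBell μ Y lam p y) * egf (degFall lam r) := by
  rw [egf_mul]
  congr 1
  funext m
  exact sum_congr rfl fun l _ => by ring

section IID

variable {Ω : Type*} [MeasurableSpace Ω] {μ : Measure Ω} {Y : ℕ → Ω → ℝ} (lam : ℝ)
  (hmeas : ∀ i, Measurable (Y i)) (hindep : iIndepFun Y μ)
  (hident : ∀ i, IdentDistrib (Y i) (Y 0) μ μ)
  (hmom : ∀ n : ℕ, Integrable (fun ω => |Y 0 ω| ^ n) μ)

include hmeas hident hmom in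
theorem integrable_degFall_mul_degFall_of_moments (i q s : ℕ) :
    Integrable (fun ω => degFall lam (Y i ω) q * degFall lam (Y i ω) s) μ := by
  refine ((hident i).comp ((measurable_degFall lam q).mul (measurable_degFall lam s)))
    |>.integrable_iff.mpr ?_
  show Integrable (fun ω => degFall lam (Y 0 ω) q * degFall lam (Y 0 ω) s) μ
  simp_rw [degFall_eq_eval, ← Polynomial.eval_mul]
  exact integrable_eval_comp (hmeas 0).aestronglyMeasurable hmom _

include hident in
theorem degMoment_degFall_eq (i s q : ℕ) :
    degMoment μ lam (Y i) (fun ω => degFall lam (Y i ω) s) q =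
      degMoment μ lam (Y 0) (fun ω => degFall lam (Y 0 ω) s) q :=
  ((hident i).comp ((measurable_degFall lam q).mul (measurable_degFall lam s))).integral_eq

include hmeas hindep in
theorem indepFun_sum_prod_degFall (k : ℕ) (t : Fin k → ℕ) (s : ℕ) :
    IndepFun (fun ω => (∑ i ∈ range k, Y i ω, ∏ i : Fin k, degFall lam (Y i ω) (t i)))
      (fun ω => (Y k ω, degFall lam (Y k ω) s)) μ := by
  have h : IndepFun (fun ω => (∑ i : Fin k, Y i ω, ∏ i : Fin k, degFall lam (Y i ω) (t i)))
      (fun ω => (Y k ω, degFall lam (Y k ω) s)) μ :=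
    (hindep.indepFun_finset (range k) {k} (by simp) hmeas).comp
      (show Measurable fun v : range k → ℝ => (∑ i : Fin k, v ⟨i, mem_range.mpr i.2⟩,
        ∏ i : Fin k, degFall lam (v ⟨i, mem_range.mpr i.2⟩) (t i)) by fun_prop)
      (show Measurable fun v : ({k} : Finset ℕ) → ℝ =>
        (v ⟨k, mem_singleton_self k⟩, degFall lam (v ⟨k, mem_singleton_self k⟩) s) by fun_prop)
  convert h using 4 with ω
  exact (Fin.sum_univ_eq_sum_range (fun i => Y i ω) k).symm

variable [IsProbabilityMeasure μ]

include hmeas hident hmom in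
theorem iterate_derivative_egf_degMoment_sub_one {s : ℕ} (hs : s ≠ 0) :
    (d⁄dX ℝ)^[s] (egf (degMoment μ lam (Y 0) 1) - 1) =
      egf (degMoment μ lam (Y 0) fun ω => degFall lam (Y 0 ω) s) *
        egf (degFall lam (-(s * lam))) := by
  rw [iterate_map_sub, iterate_derivative_one hs, sub_zero, iterate_derivative_egf_degMoment]
  simp only [Pi.one_apply, mul_one]
  exact egf_degMoment_add_const lam
    (integrable_degFall_mul_degFall_of_moments lam hmeas hident hmom 0 · s) _

include hmeas hindep hident hmom

theorem integrable_degFall_sum_mul_prod (k : ℕ) (t : Fin k → ℕ) (q : ℕ) :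
    Integrable (fun ω => degFall lam (∑ i ∈ range k, Y i ω) q *
      ∏ i : Fin k, degFall lam (Y i ω) (t i)) μ := by
  induction k generalizing q with
  | zero => simp
  | succ k ih =>
    simp only [sum_range_succ, Fin.prod_univ_castSucc, Fin.val_castSucc, Fin.val_last]
    exact (indepFun_sum_prod_degFall lam hmeas hindep k _ _).integrable_degFall_add_mul lam
      (ih _) (integrable_degFall_mul_degFall_of_moments lam hmeas hident hmom k · _) q

theorem egf_degMoment_sum_prod (k : ℕ) (t : Fin k → ℕ) :
    egf (degMoment μ lam (fun ω => ∑ i ∈ range k, Y i ω)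
        (fun ω => ∏ i : Fin k, degFall lam (Y i ω) (t i))) =
      ∏ i : Fin k, egf (degMoment μ lam (Y 0) (fun ω => degFall lam (Y 0 ω) (t i))) := by
  induction k with
  | zero =>
    rw [Fin.prod_univ_zero, ← egf_degFall_zero lam]
    congr 1
    funext q
    simp [degMoment]
  | succ k ih =>
    simp only [sum_range_succ, Fin.prod_univ_castSucc, Fin.val_castSucc, Fin.val_last]
    rw [(indepFun_sum_prod_degFall lam hmeas hindep k _ _).egf_degMoment_add_mul lam
      (integrable_degFall_sum_mul_prod lam hmeas hindep hident hmom k _)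
      (integrable_degFall_mul_degFall_of_moments lam hmeas hident hmom k · _), ih]
    congr 2
    exact funext (degMoment_degFall_eq lam hident k _)

theorem prod_iterate_derivative_egf_degMoment_sub_one {k l : ℕ} {t : Fin k → ℕ}
    (ht : t ∈ (Finset.Nat.antidiagonalTuple k l).filter fun t => ∀ i, 0 < t i) :
    ∏ i, (d⁄dX ℝ)^[t i] (egf (degMoment μ lam (Y 0) 1) - 1) =
      egf (degMoment μ lam (fun ω => ∑ i ∈ range k, Y i ω)
        fun ω => ∏ i : Fin k, degFall lam (Y i ω) (t i)) * egf (degFall lam (-(l * lam))) := by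
  rw [mem_filter, Finset.Nat.mem_antidiagonalTuple] at ht
  rw [prod_congr rfl fun i _ => iterate_derivative_egf_degMoment_sub_one lam hmeas hident hmom
    (ht.2 i).ne', prod_mul_distrib, prod_egf_degFall,
    egf_degMoment_sum_prod lam hmeas hindep hident hmom, ← ht.1]
  push_cast
  rw [sum_neg_distrib, sum_mul]

theorem coeff_pow_egf_degMoment (m p : ℕ) :
    coeff p (egf (degMoment μ lam (Y 0) 1) ^ m) =
      (∫ ω, degFall lam (∑ i ∈ range m, Y i ω) p ∂μ) / p ! := by
  have h := egf_degMoment_sum_prod lam hmeas hindep hident hmom m fun _ => 0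
  simp only [degFall_zero, prod_const_one, prod_const, card_univ, Fintype.card_fin] at h
  rw [show (1 : Ω → ℝ) = fun _ => 1 from rfl, ← h, coeff_egf]
  simp [degMoment]

theorem probDegStirling_eq_coeff (p k : ℕ) :
    probDegStirling μ Y lam p k =
      p ! / k ! * coeff p ((egf (degMoment μ lam (Y 0) 1) - 1) ^ k) := by
  rw [probDegStirling, sub_eq_add_neg, add_pow, map_sum, mul_sum, mul_sum]
  refine sum_congr rfl fun j _ => ?_
  have : (p ! : ℝ) ≠ 0 := Nat.cast_ne_zero.mpr p.factorial_ne_zero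
  rw [mul_assoc (egf (degMoment μ lam (Y 0) 1) ^ j),
    show (-1 : ℝ⟦X⟧) ^ (k - j) * (k.choose j : ℝ⟦X⟧) = C ((-1 : ℝ) ^ (k - j) * k.choose j) by simp,
    coeff_mul_C, coeff_pow_egf_degMoment lam hmeas hindep hident hmom]
  field_simp

theorem egf_probDegBell (y : ℝ) :
    egf (fun p => probDegBell μ Y lam p y) = expOfMul y (egf (degMoment μ lam (Y 0) 1) - 1) := by
  ext p
  have : (p ! : ℝ) ≠ 0 := Nat.cast_ne_zero.mpr p.factorial_ne_zero
  rw [coeff_egf, expOfMul, coeff_mk, probDegBell, sum_div]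
  refine sum_congr rfl fun k _ => ?_
  rw [probDegStirling_eq_coeff lam hmeas hindep hident hmom]
  field_simp

theorem iterate_derivative_egf_probDegBell (l : ℕ) (y : ℝ) :
    (d⁄dX ℝ)^[l] (egf fun p => probDegBell μ Y lam p y) =
      ∑ k ∈ range (l + 1), ∑ t ∈ (Finset.Nat.antidiagonalTuple k l).filter (fun t => ∀ i, 0 < t i),
        (y ^ k / k ! * Nat.multinomial univ t) •
          ((egf fun p => probDegBell μ Y lam p y) *
            egf (degMoment μ lam (fun ω => ∑ i ∈ range k, Y i ω)
              fun ω => ∏ i : Fin k, degFall lam (Y i ω) (t i)) *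
            egf (degFall lam (-(l * lam)))) := by
  rw [egf_probDegBell lam hmeas hindep hident hmom,
    iterate_derivative_expOfMul (constantCoeff_egf_degMoment_sub_one μ lam (Y 0)), mul_sum]
  refine sum_congr rfl fun k _ => ?_
  rw [orderedBell, smul_sum, mul_sum]
  refine sum_congr rfl fun t ht => ?_
  rw [prod_iterate_derivative_egf_degMoment_sub_one lam hmeas hindep hident hmom ht,
    ← Nat.cast_smul_eq_nsmul ℝ, smul_smul, mul_smul_comm, mul_assoc]

theorem iterate_derivative_egf_probDegrBell (r n : ℕ) (y : ℝ) :
    (d⁄dX ℝ)^[n] (egf fun m => probDegrBell μ Y lam r m y) =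
      ∑ l ∈ range (n + 1), ∑ k ∈ range (l + 1),
        ∑ t ∈ (Finset.Nat.antidiagonalTuple k l).filter (fun t => ∀ i, 0 < t i),
          (n.choose l * degFall lam r (n - l) * (y ^ k / k ! * Nat.multinomial univ t)) •
            ((egf fun m => probDegrBell μ Y lam r m y) *
              egf (degMoment μ lam (fun ω => ∑ i ∈ range k, Y i ω - n * lam)
                fun ω => ∏ i : Fin k, degFall lam (Y i ω) (t i))) := by
  rw [egf_probDegrBell, (d⁄dX ℝ).iterate_leibniz]
  refine sum_congr rfl fun l hl => ?_
  have hl : l ≤ n := Nat.lt_succ_iff.mp (mem_range.mp hl)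
  have hexp : egf (degFall lam (-(l * lam))) * egf (degFall lam (r - (n - l : ℕ) * lam)) =
      egf (degFall lam r) * egf (degFall lam (-(n * lam))) := by
    rw [egf_degFall_mul, egf_degFall_mul, Nat.cast_sub hl]
    ring_nf
  rw [iterate_derivative_egf_probDegBell lam hmeas hindep hident hmom,
    iterate_derivative_egf_degFall, sum_mul, smul_sum]
  refine sum_congr rfl fun k _ => ?_
  rw [sum_mul, smul_sum]
  refine sum_congr rfl fun t _ => ?_
  simp_rw [sub_eq_add_neg _ ((n : ℝ) * lam)]
  rw [egf_degMoment_add_const lam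
      (integrable_degFall_sum_mul_prod lam hmeas hindep hident hmom k t),
    smul_mul_smul_comm, ← Nat.cast_smul_eq_nsmul ℝ, smul_smul]
  congr 1
  · ring
  · rw [mul_assoc _ (egf (degFall lam (-(l * lam)))), hexp]
    ring

end IID

theorem spivey_probDegrBell_general {Ω : Type*} [MeasurableSpace Ω] (μ : Measure Ω)
    [IsProbabilityMeasure μ] (Y : ℕ → Ω → ℝ)
    (hmeas : ∀ i, Measurable (Y i))
    (hindep : iIndepFun Y μ)
    (hident : ∀ i, IdentDistrib (Y i) (Y 0) μ μ)
    (hmom : ∀ n : ℕ, Integrable (fun ω => |Y 0 ω| ^ n) μ)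
    (lam : ℝ) (r : ℕ) (n j : ℕ) (y : ℝ) :
    probDegrBell μ Y lam r (j + n) y =
      ∑ l ∈ Finset.range (n + 1), (Nat.choose n l : ℝ) * degFall lam (r : ℝ) (n - l) *
        ∑ k ∈ Finset.range (l + 1), ∑ m ∈ Finset.range (j + 1),
          (y ^ k / (Nat.factorial k : ℝ)) * (Nat.choose j m : ℝ) *
          (∑ t ∈ (Finset.Nat.antidiagonalTuple k l).filter (fun t => ∀ i, 0 < t i),
            (Nat.multinomial Finset.univ t : ℝ) *
              ∫ ω, degFall lam ((∑ i ∈ Finset.range k, Y i ω) - (n : ℝ) * lam) (j - m) *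
                ∏ i : Fin k, degFall lam (Y (i : ℕ) ω) (t i) ∂μ) *
          probDegrBell μ Y lam r m y := by
  calc probDegrBell μ Y lam r (j + n) y
      = j ! * coeff j ((d⁄dX ℝ)^[n] (egf fun m => probDegrBell μ Y lam r m y)) := by
        rw [iterate_derivative_egf, coeff_egf,
          mul_div_cancel₀ _ (Nat.cast_ne_zero.mpr j.factorial_ne_zero)]
    _ = _ := by
      rw [iterate_derivative_egf_probDegrBell lam hmeas hindep hident hmom]
      simp only [map_sum, map_smul, smul_eq_mul, mul_sum, mul_left_comm (j ! : ℝ),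
        factorial_mul_coeff_egf_mul, degMoment]
      refine sum_congr rfl fun l _ => sum_congr rfl fun k _ => ?_
      simp only [mul_sum, sum_mul]
      rw [sum_comm]
      exact sum_congr rfl fun m _ => sum_congr rfl fun t _ => by ring

/-- Spivey-type relation for the probabilistic degenerate `r`-Bell polynomials. -/
theorem spivey_probDegrBell {Ω : Type*} [MeasurableSpace Ω] (μ : Measure Ω)
    [IsProbabilityMeasure μ] (Y : ℕ → Ω → ℝ)
    (hmeas : ∀ i, Measurable (Y i))
    (hindep : iIndepFun Y μ)
    (hident : ∀ i, IdentDistrib (Y i) (Y 0) μ μ)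
    (hmom : ∀ n : ℕ, Integrable (fun ω => |Y 0 ω| ^ n) μ)
    (lam : ℝ) (r : ℕ) (hr : 0 < r) (n j : ℕ) (y : ℝ) :
    probDegrBell μ Y lam r (j + n) y =
      ∑ l ∈ Finset.range (n + 1), (Nat.choose n l : ℝ) * degFall lam (r : ℝ) (n - l) *
        ∑ k ∈ Finset.range (l + 1), ∑ m ∈ Finset.range (j + 1),
          (y ^ k / (Nat.factorial k : ℝ)) * (Nat.choose j m : ℝ) *
          (∑ t ∈ (Finset.Nat.antidiagonalTuple k l).filter (fun t => ∀ i, 0 < t i),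
            (Nat.multinomial Finset.univ t : ℝ) *
              ∫ ω, degFall lam ((∑ i ∈ Finset.range k, Y i ω) - (n : ℝ) * lam) (j - m) *
                ∏ i : Fin k, degFall lam (Y (i : ℕ) ω) (t i) ∂μ) *
          probDegrBell μ Y lam r m y :=
  spivey_probDegrBell_general μ Y hmeas hindep hident hmom lam r n j y
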